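/- arXiv:0803.2366 — 3 statements merged into one kernel-verified Lean document; each statement's English description precedes it below -/
import Mathlib

section
/- Fix an integer k ≥ 1. Assume that lim_{l→0⁺} (k!)² · Z_l(k+1) · exp(π²/(3l)) · l^{2k+1} = 2π. Let ℓ be a function assigning to every complex number t with 0 < |t| < 1 a positive real number ℓ(t), and suppose there are constants C > 0 and 0 < δ < 1 such that |ℓ(t) − 2π²/log(1/|t|)| ≤ C·(log(1/|t|))^{−4} whenever 0 < |t| < δ. Then Z_{ℓ(t)}(k+1) is asymptotically equivalent to (1/(π·(2π²)^{2k}·(k!)²)) · |t|^{1/6} · (log(1/|t|))^{2k+1} as t → 0 (t ≠ 0); that is, the quotient of the left-hand side by the right-hand side tends to 1. -/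
open Complex Filter Topology

/-- `Z_l(s) = ∏_{m=0}^{∞}(1 − e^{−(s+m)l})²`. -/
noncomputable def Zl (l : ℝ) (s : ℂ) : ℂ :=
  ∏' m : ℕ, (1 - Complex.exp (-(s + m) * l)) ^ 2

/-!
Write `L = log (1/|t|)`. The bound on `ℓ` gives `(ℓ L − 2π²) L → 0`, hence `ℓ L → 2π²` (so `ℓ → 0⁺`)
and `L/6 − π²/(3ℓ) = (ℓ L − 2π²) L / (6 ℓ L) → 0`. Since `|t|^{1/6} = exp (−L/6)`, the quotient in
question is the expression of the assumed limit at `l = ℓ(t)`, divided by `2π`, times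
`exp (L/6 − π²/(3ℓ))` and `(2π²/(ℓ L))^{2k+1}`, and each of these three factors tends to `1`.
-/

section ScaleAsymptotics

variable {α : Type*} {f : Filter α} {ℓ L : α → ℝ} {a : ℝ}

theorem tendsto_mul_sub_mul_of_abs_sub_div_le {C : ℝ} {n : ℤ} (hn : n < -2)
    (hL : Tendsto L f atTop) (hbound : ∀ᶠ t in f, |ℓ t - a / L t| ≤ C * L t ^ n) :
    Tendsto (fun t => (ℓ t * L t - a) * L t) f (𝓝 0) := by
  have hmajor : Tendsto (fun t => C * L t ^ (n + 2)) f (𝓝 0) := by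
    simpa using ((tendsto_zpow_atTop_zero (by omega)).comp hL).const_mul C
  refine squeeze_zero_norm' ?_ hmajor
  filter_upwards [hbound, hL.eventually_gt_atTop 0] with t ht hLt
  calc ‖(ℓ t * L t - a) * L t‖ = |ℓ t - a / L t| * L t ^ (2 : ℤ) := by
        rw [Real.norm_eq_abs, ← abs_of_pos (zpow_pos hLt 2), ← abs_mul]
        congr 1
        field_simp
    _ ≤ C * L t ^ n * L t ^ (2 : ℤ) := by gcongr
    _ = C * L t ^ (n + 2) := by rw [mul_assoc, ← zpow_add₀ hLt.ne']

theorem tendsto_mul_of_tendsto_mul_sub_mul (hL : Tendsto L f atTop)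
    (h : Tendsto (fun t => (ℓ t * L t - a) * L t) f (𝓝 0)) :
    Tendsto (fun t => ℓ t * L t) f (𝓝 a) := by
  have hdiff : Tendsto (fun t => ℓ t * L t - a) f (𝓝 0) := by
    refine (h.div_atTop hL).congr' ?_
    filter_upwards [hL.eventually_ne_atTop 0] with t ht
    field_simp
  simpa using hdiff.add_const a

theorem tendsto_sub_div_of_tendsto_mul_sub_mul (hL : Tendsto L f atTop)
    (h : Tendsto (fun t => (ℓ t * L t - a) * L t) f (𝓝 0)) (ha : a ≠ 0) :
    Tendsto (fun t => L t - a / ℓ t) f (𝓝 0) := by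
  have hprod := tendsto_mul_of_tendsto_mul_sub_mul hL h
  have hquot : Tendsto (fun t => (ℓ t * L t - a) * L t / (ℓ t * L t)) f (𝓝 0) := by
    rw [← zero_div a]
    exact h.div hprod ha
  refine hquot.congr' ?_
  filter_upwards [hprod.eventually_ne ha] with t ht
  have hℓ : ℓ t ≠ 0 := left_ne_zero_of_mul ht
  have hLt : L t ≠ 0 := right_ne_zero_of_mul ht
  field_simp

theorem tendsto_nhdsGT_zero_of_tendsto_mul (hL : Tendsto L f atTop)
    (h : Tendsto (fun t => ℓ t * L t) f (𝓝 a)) (ha : 0 < a) :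
    Tendsto ℓ f (𝓝[>] 0) := by
  refine tendsto_nhdsWithin_iff.mpr ⟨(h.div_atTop hL).congr' ?_, ?_⟩
  · filter_upwards [hL.eventually_ne_atTop 0] with t ht
    field_simp
  · filter_upwards [h.eventually_const_lt ha, hL.eventually_gt_atTop 0] with t hprod hLt
    exact pos_of_mul_pos_left hprod hLt.le

end ScaleAsymptotics

theorem tendsto_log_one_div_norm_nhdsNE_zero {E : Type*} [NormedAddGroup E] :
    Tendsto (fun t : E => Real.log (1 / ‖t‖)) (𝓝[≠] 0) atTop := by
  simp only [one_div, Real.log_inv]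
  exact tendsto_neg_atBot_atTop.comp (Real.tendsto_log_nhdsGT_zero.comp tendsto_norm_nhdsNE_zero)

theorem Zl_div_profile_eq (k : ℕ) {x r : ℝ} (hx : x ≠ 0) (hr : 0 < r)
    (hlog : Real.log (1 / r) ≠ 0) :
    Zl x (k + 1) / (((1 / (Real.pi * (2 * Real.pi ^ 2) ^ (2 * k) * (Nat.factorial k : ℝ) ^ 2)) *
        r ^ ((1 : ℝ) / 6) * (Real.log (1 / r)) ^ (2 * k + 1) : ℝ) : ℂ) =
      (Nat.factorial k : ℂ) ^ 2 * Zl x (k + 1) * Complex.exp ((Real.pi ^ 2 / (3 * x) : ℝ)) *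
        (x : ℂ) ^ (2 * k + 1) / ((2 * Real.pi : ℝ) : ℂ) *
        ((Real.exp ((Real.log (1 / r) - 2 * Real.pi ^ 2 / x) / 6) *
          (2 * Real.pi ^ 2 / (x * Real.log (1 / r))) ^ (2 * k + 1) : ℝ) : ℂ) := by
  set L := Real.log (1 / r)
  have hroot : r ^ ((1 : ℝ) / 6) = Real.exp (-(L / 6)) := by
    rw [Real.rpow_def_of_pos hr]
    simp only [L, one_div, Real.log_inv]
    congr 1
    ring
  have hexp : Real.exp ((L - 2 * Real.pi ^ 2 / x) / 6) =
      Real.exp (L / 6) / Real.exp (Real.pi ^ 2 / (3 * x)) := by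
    rw [← Real.exp_sub]
    congr 1
    ring
  rw [hroot, hexp, Real.exp_neg, ← Complex.ofReal_exp]
  have hxc : (x : ℂ) ≠ 0 := by exact_mod_cast hx
  have hLc : (L : ℂ) ≠ 0 := by exact_mod_cast hlog
  push_cast
  rw [div_pow, mul_pow]
  field_simp
  ring

theorem Zl_degeneration_general (k : ℕ)
    (hlim : Tendsto
      (fun l : ℝ => ((Nat.factorial k : ℂ)) ^ 2 * Zl l (k + 1) *
        Complex.exp ((Real.pi ^ 2 / (3 * l) : ℝ)) * (l : ℂ) ^ (2 * k + 1))
      (nhdsWithin 0 (Set.Ioi 0)) (nhds ((2 * Real.pi : ℝ) : ℂ)))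
    (ℓ : ℂ → ℝ)
    (C : ℝ) (δ : ℝ) (hδ0 : 0 < δ)
    (hest : ∀ t : ℂ, 0 < ‖t‖ → ‖t‖ < δ →
      |ℓ t - 2 * Real.pi ^ 2 / Real.log (1 / ‖t‖)| ≤
        C * (Real.log (1 / ‖t‖)) ^ (-4 : ℤ)) :
    Tendsto
      (fun t : ℂ => Zl (ℓ t) (k + 1) /
        (((1 / (Real.pi * (2 * Real.pi ^ 2) ^ (2 * k) * (Nat.factorial k : ℝ) ^ 2)) *
          ‖t‖ ^ ((1 : ℝ) / 6) *
          (Real.log (1 / ‖t‖)) ^ (2 * k + 1) : ℝ) : ℂ))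
      (nhdsWithin 0 {t : ℂ | t ≠ 0}) (nhds 1) := by
  set L : ℂ → ℝ := fun t => Real.log (1 / ‖t‖)
  have hL : Tendsto L (𝓝[≠] 0) atTop := tendsto_log_one_div_norm_nhdsNE_zero
  have hnorm : ∀ᶠ t in 𝓝[≠] (0 : ℂ), ‖t‖ ∈ Set.Ioo 0 δ :=
    tendsto_norm_nhdsNE_zero (Ioo_mem_nhdsGT hδ0)
  have hscale := tendsto_mul_sub_mul_of_abs_sub_div_le (by norm_num) hL
    (hnorm.mono fun t ht => hest t ht.1 ht.2)
  have hprod := tendsto_mul_of_tendsto_mul_sub_mul hL hscale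
  have hπ : 0 < 2 * Real.pi ^ 2 := by positivity
  have hℓ := tendsto_nhdsGT_zero_of_tendsto_mul hL hprod hπ
  have hcorr : Tendsto (fun t => Real.exp ((L t - 2 * Real.pi ^ 2 / ℓ t) / 6) *
      (2 * Real.pi ^ 2 / (ℓ t * L t)) ^ (2 * k + 1)) (𝓝[≠] 0) (𝓝 1) := by
    have hexp := (tendsto_sub_div_of_tendsto_mul_sub_mul hL hscale hπ.ne').div_const 6
    have hratio := (tendsto_const_nhds (x := 2 * Real.pi ^ 2)).div hprod hπ.ne'
    rw [zero_div] at hexp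
    rw [div_self hπ.ne'] at hratio
    simpa using ((Real.continuous_exp.tendsto 0).comp hexp).mul (hratio.pow (2 * k + 1))
  have hlimit := ((hlim.comp hℓ).div_const ((2 * Real.pi : ℝ) : ℂ)).mul
    ((continuous_ofReal.tendsto 1).comp hcorr)
  rw [div_self (by exact_mod_cast Real.two_pi_pos.ne'), ofReal_one, one_mul] at hlimit
  refine hlimit.congr' ?_
  filter_upwards [hnorm, hL.eventually_gt_atTop 0, hℓ self_mem_nhdsWithin] with t ht hLt hℓt
  exact (Zl_div_profile_eq k (ne_of_gt hℓt) ht.1 hLt.ne').symm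

/-- Fix an integer `k ≥ 1` and assume
`lim_{l→0⁺} (k!)² · Z_l(k+1) · exp(π²/(3l)) · l^{2k+1} = 2π`.
Let `ℓ` assign to every complex `t` with `0 < |t| < 1` a positive real number, and suppose
`|ℓ(t) − 2π²/log(1/|t|)| ≤ C·(log(1/|t|))^{−4}` for `0 < |t| < δ`.  Then
`Z_{ℓ(t)}(k+1) ∼ (1/(π·(2π²)^{2k}·(k!)²)) · |t|^{1/6} · (log(1/|t|))^{2k+1}` as `t → 0`,
`t ≠ 0`: the quotient of the two sides tends to `1`. -/
theorem Zl_degeneration (k : ℕ) (hk : 1 ≤ k)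
    (hlim : Tendsto
      (fun l : ℝ => ((Nat.factorial k : ℂ)) ^ 2 * Zl l (k + 1) *
        Complex.exp ((Real.pi ^ 2 / (3 * l) : ℝ)) * (l : ℂ) ^ (2 * k + 1))
      (nhdsWithin 0 (Set.Ioi 0)) (nhds ((2 * Real.pi : ℝ) : ℂ)))
    (ℓ : ℂ → ℝ)
    (hpos : ∀ t : ℂ, 0 < ‖t‖ → ‖t‖ < 1 → 0 < ℓ t)
    (C : ℝ) (hC : 0 < C) (δ : ℝ) (hδ0 : 0 < δ) (hδ1 : δ < 1)
    (hest : ∀ t : ℂ, 0 < ‖t‖ → ‖t‖ < δ →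
      |ℓ t - 2 * Real.pi ^ 2 / Real.log (1 / ‖t‖)| ≤
        C * (Real.log (1 / ‖t‖)) ^ (-4 : ℤ)) :
    Tendsto
      (fun t : ℂ => Zl (ℓ t) (k + 1) /
        (((1 / (Real.pi * (2 * Real.pi ^ 2) ^ (2 * k) * (Nat.factorial k : ℝ) ^ 2)) *
          ‖t‖ ^ ((1 : ℝ) / 6) *
          (Real.log (1 / ‖t‖)) ^ (2 * k + 1) : ℝ) : ℂ))
      (nhdsWithin 0 {t : ℂ | t ≠ 0}) (nhds 1) :=
  Zl_degeneration_general k hlim ℓ C δ hδ0 hest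
end

section
/- Let k ≥ 1 be an integer and 0 < c < 1 a real constant. Then lim_{t→0, t≠0} I₁(t) · (log(1/|t|))^{−(2k+1)} = (2k)! / (2^{k−1} · π^{2k} · (k!)²). Equivalently, I₁(t) = (1/(2^{k−1}π^{2k})) · (log(1/|t|))^{2k+1} · ((2k)!/(k!)²) · R(t) where R(t) → 1 as t → 0. -/
/-!
The density is radial, so polar coordinates and the substitution `r = exp (x · log|t| / π)`
turn `I₁(t)` into `2^(k+1) (log(1/|t|)/π)^(2k+1) ∫_a^(π-a) sin^(2k) x dx` with
`a = π log c / log|t|`. As `t → 0` we have `a → 0`, and the Wallis integral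
`∫_0^π sin^(2k) = π (2k)! / (4^k (k!)²)` gives the constant.
-/

open Complex MeasureTheory Filter Topology

/-- The annulus `A_t = {u ∈ ℂ : |t|/c < |u| < c}`. -/
def annulusA (c : ℝ) (t : ℂ) : Set ℂ :=
  {u : ℂ | ‖t‖ / c < ‖u‖ ∧ ‖u‖ < c}

/-- The density
`F_{t,k}(u) = (2^k/π)·|u|^{−2k−2}·((|u|·log|t|/π)·sin(π·log|u|/log|t|))^{2k}`. -/
noncomputable def densityF (k : ℕ) (t u : ℂ) : ℝ :=
  (2 ^ k / Real.pi) * (‖u‖) ^ (-(2 * (k : ℤ)) - 2) *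
    ((‖u‖ * Real.log (‖t‖) / Real.pi) *
      Real.sin (Real.pi * Real.log (‖u‖) / Real.log (‖t‖))) ^ (2 * k)

/-- `I₁(t) = ∫_{A_t} F_{t,k}(u) dA(u)`, the integral with respect to Lebesgue measure. -/
noncomputable def Ione (k : ℕ) (c : ℝ) (t : ℂ) : ℝ :=
  ∫ u in annulusA c t, densityF k t u

open scoped Real
open Set

lemma setIntegral_annulus_fun_norm_addHaar {E F : Type*} [NormedAddCommGroup E]
    [InnerProductSpace ℝ E] [Nontrivial E] [FiniteDimensional ℝ E] [MeasurableSpace E]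
    [BorelSpace E] [NormedAddCommGroup F] [NormedSpace ℝ F] (μ : Measure E) [μ.IsAddHaarMeasure]
    (f : ℝ → F) {a b : ℝ} (ha : 0 ≤ a) (hab : a ≤ b) :
    ∫ x in {x : E | a < ‖x‖ ∧ ‖x‖ < b}, f ‖x‖ ∂μ =
      Module.finrank ℝ E • μ.real (Metric.ball 0 1) •
        ∫ r in a..b, r ^ (Module.finrank ℝ E - 1) • f r := by
  have hmeas : MeasurableSet {x : E | a < ‖x‖ ∧ ‖x‖ < b} :=
    measurableSet_Ioo.preimage continuous_norm.measurable
  rw [← MeasureTheory.integral_indicator hmeas]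
  change ∫ x, (Ioo a b).indicator f ‖x‖ ∂μ = _
  rw [integral_fun_norm_addHaar, intervalIntegral.integral_of_le hab,
    integral_Ioc_eq_integral_Ioo]
  simp_rw [← indicator_smul_apply (Ioo a b) (· ^ (Module.finrank ℝ E - 1))]
  rw [setIntegral_indicator measurableSet_Ioo,
    inter_eq_right.2 (Ioo_subset_Ioi_self.trans (Ioi_subset_Ioi ha))]

lemma Complex.setIntegral_annulus_fun_norm {F : Type*} [NormedAddCommGroup F] [NormedSpace ℝ F]
    (f : ℝ → F) {a b : ℝ} (ha : 0 ≤ a) (hab : a ≤ b) :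
    ∫ u in {u : ℂ | a < ‖u‖ ∧ ‖u‖ < b}, f ‖u‖ = (2 * π) • ∫ r in a..b, r • f r := by
  rw [setIntegral_annulus_fun_norm_addHaar volume f ha hab, Complex.finrank_real_complex,
    measureReal_def, Complex.volume_ball, mul_smul, ← Nat.cast_smul_eq_nsmul ℝ]
  norm_num

lemma intervalIntegral_inv_mul_comp_log {g : ℝ → ℝ} (hg : Continuous g) {a b : ℝ}
    (ha : 0 < a) (hb : 0 < b) :
    ∫ r in a..b, r⁻¹ * g (Real.log r) = ∫ x in Real.log a..Real.log b, g x := by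
  have hpos : ∀ r ∈ uIcc a b, 0 < r := fun r hr => (lt_min ha hb).trans_le hr.1
  rw [← intervalIntegral.integral_comp_mul_deriv (f := Real.log) (f' := fun r => r⁻¹)
    (fun r hr => Real.hasDerivAt_log (hpos r hr).ne')
    (continuousOn_inv₀.mono fun r hr => (hpos r hr).ne') hg]
  simp only [Function.comp_apply, mul_comm]

/-- `densityF k t u = radialDensity k (Real.log ‖t‖) ‖u‖` holds definitionally. -/
noncomputable def radialDensity (k : ℕ) (L r : ℝ) : ℝ :=
  (2 ^ k / π) * r ^ (-(2 * (k : ℤ)) - 2) * ((r * L / π) * Real.sin (π * Real.log r / L)) ^ (2 * k)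

lemma mul_radialDensity (k : ℕ) (L : ℝ) {r : ℝ} (hr : 0 < r) :
    r * radialDensity k L r =
    (2 ^ k / π) * (L / π) ^ (2 * k) * (r⁻¹ * Real.sin (π / L * Real.log r) ^ (2 * k)) := by
  rw [radialDensity, show -(2 * (k : ℤ)) - 2 = -((2 * k + 2 : ℕ) : ℤ) by push_cast; ring,
    zpow_neg, zpow_natCast, mul_div_right_comm π]
  field_simp
  ring

lemma Ione_eq_mul_integral_sin_pow (k : ℕ) {c : ℝ} (hc : 0 < c) {t : ℂ} (ht : t ≠ 0)
    (hL : Real.log ‖t‖ ≠ 0) (htc : ‖t‖ ≤ c ^ 2) :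
    Ione k c t = 2 ^ (k + 1) * (-Real.log ‖t‖ / π) ^ (2 * k + 1) *
      ∫ x in π * Real.log c / Real.log ‖t‖..π - π * Real.log c / Real.log ‖t‖,
        Real.sin x ^ (2 * k) := by
  set s := ‖t‖
  set L := Real.log s
  have hs : 0 < s := norm_pos_iff.2 ht
  have hsc : 0 < s / c := div_pos hs hc
  have hsc_le : s / c ≤ c := by rw [div_le_iff₀ hc]; nlinarith
  have hpos : ∀ r ∈ uIcc (s / c) c, 0 < r := fun r hr => (lt_min hsc hc).trans_le hr.1
  have hlog_lower : π / L * Real.log (s / c) = π - π * Real.log c / L := by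
    rw [Real.log_div hs.ne' hc.ne']
    field_simp
    rfl
  have hlog_upper : π / L * Real.log c = π * Real.log c / L := by ring
  calc Ione k c t
      = (2 * π) • ∫ r in s / c..c, r • radialDensity k L r :=
        Complex.setIntegral_annulus_fun_norm (radialDensity k L) hsc.le hsc_le
    _ = 2 * π * ((2 ^ k / π) * (L / π) ^ (2 * k) *
          ∫ r in s / c..c, r⁻¹ * Real.sin (π / L * Real.log r) ^ (2 * k)) := by
        simp_rw [smul_eq_mul]
        congr 1
        rw [← intervalIntegral.integral_const_mul]
        exact intervalIntegral.integral_congr fun r hr => mul_radialDensity k L (hpos r hr)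
    _ = 2 * π * ((2 ^ k / π) * (L / π) ^ (2 * k) * ((π / L)⁻¹ *
          ∫ x in π - π * Real.log c / L..π * Real.log c / L, Real.sin x ^ (2 * k))) := by
        rw [intervalIntegral_inv_mul_comp_log (g := fun x => Real.sin (π / L * x) ^ (2 * k))
            (by fun_prop) hsc hc,
          intervalIntegral.integral_comp_mul_left (fun x => Real.sin x ^ (2 * k))
            (div_ne_zero Real.pi_ne_zero hL), hlog_lower, hlog_upper, smul_eq_mul]
    _ = _ := by
        rw [intervalIntegral.integral_symm, neg_div, (odd_two_mul_add_one k).neg_pow]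
        generalize ∫ x in π * Real.log c / L..π - π * Real.log c / L, Real.sin x ^ (2 * k) = J
        rw [inv_div, pow_succ, pow_succ]
        field_simp

lemma Filter.Tendsto.intervalIntegral_of_continuous {α E : Type*} [NormedAddCommGroup E]
    [NormedSpace ℝ E] {f : ℝ → E} (hf : Continuous f) {l : Filter α} {a b : α → ℝ}
    {a₀ b₀ : ℝ} (ha : Tendsto a l (𝓝 a₀)) (hb : Tendsto b l (𝓝 b₀)) :
    Tendsto (fun x => ∫ y in a x..b x, f y) l (𝓝 (∫ y in a₀..b₀, f y)) := by
  have hint : ∀ p q : ℝ, IntervalIntegrable f volume p q := hf.intervalIntegrable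
  have hprim := intervalIntegral.continuous_primitive hint 0
  have hsplit : ∀ p q : ℝ, ∫ y in p..q, f y = (∫ y in 0..q, f y) - ∫ y in 0..p, f y :=
    fun p q => (intervalIntegral.integral_interval_sub_left (hint 0 q) (hint 0 p)).symm
  rw [hsplit]
  exact (((hprim.tendsto b₀).comp hb).sub ((hprim.tendsto a₀).comp ha)).congr
    fun x => (hsplit _ _).symm

lemma prod_range_odd_div_even_eq_factorial_ratio (k : ℕ) :
    ∏ i ∈ Finset.range k, (2 * (i : ℝ) + 1) / (2 * i + 2) =
      (2 * k).factorial / (4 ^ k * (k.factorial : ℝ) ^ 2) := by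
  induction k with
  | zero => simp
  | succ n ih =>
    rw [Finset.prod_range_succ, ih, Nat.mul_succ, Nat.factorial_succ, Nat.factorial_succ,
      Nat.factorial_succ n]
    push_cast
    field_simp
    ring

lemma integral_sin_pow_two_mul (k : ℕ) :
    ∫ x in 0..π, Real.sin x ^ (2 * k) =
      π * (2 * k).factorial / (4 ^ k * (k.factorial : ℝ) ^ 2) := by
  rw [integral_sin_pow_even, prod_range_odd_div_even_eq_factorial_ratio, mul_div_assoc]

theorem Ione_limit_general (k : ℕ) (hk : 1 ≤ k) (c : ℝ) (hc0 : 0 < c) :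
    Tendsto
      (fun t : ℂ => Ione k c t * (Real.log (1 / ‖t‖)) ^ (-(2 * (k : ℤ)) - 1))
      (nhdsWithin 0 {t : ℂ | t ≠ 0})
      (nhds ((Nat.factorial (2 * k) : ℝ) /
        (2 ^ (k - 1) * Real.pi ^ (2 * k) * (Nat.factorial k : ℝ) ^ 2))) := by
  have hlog : Tendsto (fun t : ℂ => Real.log ‖t‖) (𝓝[≠] 0) atBot :=
    Real.tendsto_log_nhdsGT_zero.comp tendsto_norm_nhdsNE_zero
  have hendpoint : Tendsto (fun t : ℂ => π * Real.log c / Real.log ‖t‖) (𝓝[≠] 0) (𝓝 0) :=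
    tendsto_const_nhds.div_atBot hlog
  have hJ := Tendsto.intervalIntegral_of_continuous (f := fun x => Real.sin x ^ (2 * k))
    (by fun_prop) hendpoint ((tendsto_const_nhds (x := π)).sub hendpoint)
  rw [sub_zero, integral_sin_pow_two_mul] at hJ
  have hsmall : ∀ᶠ t in 𝓝[≠] (0 : ℂ), ‖t‖ ≤ c ^ 2 :=
    (tendsto_norm_nhdsNE_zero.mono_right nhdsWithin_le_nhds).eventually
      (Iic_mem_nhds (by positivity))
  have heq : ∀ᶠ t in 𝓝[≠] (0 : ℂ), 2 ^ (k + 1) / π ^ (2 * k + 1) *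
      ∫ x in π * Real.log c / Real.log ‖t‖..π - π * Real.log c / Real.log ‖t‖,
        Real.sin x ^ (2 * k) = Ione k c t * Real.log (1 / ‖t‖) ^ (-(2 * (k : ℤ)) - 1) := by
    filter_upwards [self_mem_nhdsWithin, hlog.eventually_lt_atBot 0, hsmall] with t ht hL htc
    rw [Ione_eq_mul_integral_sin_pow k hc0 ht hL.ne htc, one_div, Real.log_inv,
      show -(2 * (k : ℤ)) - 1 = -((2 * k + 1 : ℕ) : ℤ) by push_cast; ring, zpow_neg,
      zpow_natCast, div_pow]
    have hL' : -Real.log ‖t‖ ≠ 0 := by linarith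
    field_simp
  have hvalue : 2 ^ (k + 1) / π ^ (2 * k + 1) *
      (π * (2 * k).factorial / (4 ^ k * (k.factorial : ℝ) ^ 2)) =
      (2 * k).factorial / (2 ^ (k - 1) * π ^ (2 * k) * (k.factorial : ℝ) ^ 2) := by
    obtain ⟨j, rfl⟩ : ∃ j, k = j + 1 := ⟨k - 1, by omega⟩
    rw [Nat.add_sub_cancel, show (4 : ℝ) = 2 ^ 2 by norm_num, ← pow_mul]
    field_simp
    ring
  rw [← hvalue]
  exact (hJ.const_mul _).congr' heq

/-- For an integer `k ≥ 1` and `0 < c < 1`,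
`lim_{t→0, t≠0} I₁(t) · (log(1/|t|))^{−(2k+1)} = (2k)! / (2^{k−1}·π^{2k}·(k!)²)`. -/
theorem Ione_limit (k : ℕ) (hk : 1 ≤ k) (c : ℝ) (hc0 : 0 < c) (hc1 : c < 1) :
    Tendsto
      (fun t : ℂ => Ione k c t * (Real.log (1 / ‖t‖)) ^ (-(2 * (k : ℤ)) - 1))
      (nhdsWithin 0 {t : ℂ | t ≠ 0})
      (nhds ((Nat.factorial (2 * k) : ℝ) /
        (2 ^ (k - 1) * Real.pi ^ (2 * k) * (Nat.factorial k : ℝ) ^ 2))) :=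
  Ione_limit_general k hk c hc0
end

section
/- Let k ≥ 1 be an integer, 0 < c < 1 a real constant, and C > 0. Suppose f and g are holomorphic on the disc {u ∈ ℂ : |u| < c} and satisfy |f(u)| ≤ C|u| and |g(v)| ≤ C|v| for all |u|, |v| < c. Then there is a constant C′ > 0, depending only on k, c and C, such that for every complex t with 0 < |t| < c one has |∫_{A_t} f(u) · conj(g(t/u)) · F_{t,k}(u) dA(u)| ≤ C′ · |t| · (log(1/|t|))^{2k+1}. (Note that for u ∈ A_t one has |t/u| < c, so g(t/u) is defined.) -/
/-!
On `A_t` we have `|f(u)| ≤ C|u|` and `|g(t/u)| ≤ C|t|/|u|`, while `|sin| ≤ 1` bounds the density by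
`(2^k/π)·(log(1/|t|)/π)^{2k}·|u|^{-2}`. So the integrand is at most a constant times
`|t|·log(1/|t|)^{2k}·|u|^{-2}`, and in polar coordinates `∫_{A_t} |u|^{-2} dA = 2π·log(c²/|t|)`,
which is at most `2π·log(1/|t|)` because `c < 1`.
-/

open Complex MeasureTheory

open scoped Real
open Set

theorem integral_preimage_norm_Ioo_inv_sq {a b : ℝ} (ha : 0 < a) (hab : a < b) :
    ∫ u in (fun u : ℂ => ‖u‖) ⁻¹' Ioo a b, (‖u‖ ^ 2)⁻¹ = 2 * π * Real.log (b / a) := by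
  rw [← integral_indicator (measurableSet_Ioo.preimage continuous_norm.measurable)]
  have hcomp (u : ℂ) : ((fun u : ℂ => ‖u‖) ⁻¹' Ioo a b).indicator (fun u => (‖u‖ ^ 2)⁻¹) u =
      (Ioo a b).indicator (fun r : ℝ => (r ^ 2)⁻¹) ‖u‖ :=
    indicator_comp_right (g := fun r : ℝ => (r ^ 2)⁻¹) (fun u : ℂ => ‖u‖)
  simp_rw [hcomp]
  rw [integral_fun_norm_addHaar volume (fun r => (Ioo a b).indicator (fun r : ℝ => (r ^ 2)⁻¹) r),
    Complex.finrank_real_complex]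
  simp_rw [← indicator_smul_apply (Ioo a b) (fun y : ℝ => y ^ (2 - 1))]
  rw [setIntegral_indicator measurableSet_Ioo,
    inter_eq_right.mpr (Ioo_subset_Ioi_self.trans (Ioi_subset_Ioi ha.le))]
  have hinv : ∫ y in Ioo a b, y ^ (2 - 1) • (y ^ 2)⁻¹ = Real.log (b / a) := by
    rw [setIntegral_congr_fun measurableSet_Ioo (g := fun y => y⁻¹) fun y hy => by
        have : y ≠ 0 := (ha.trans hy.1).ne'
        rw [smul_eq_mul]
        field_simp
        ring,
      ← integral_Ioc_eq_integral_Ioo, ← intervalIntegral.integral_of_le hab.le,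
      integral_inv (notMem_uIcc_of_lt ha (ha.trans hab))]
  rw [hinv]
  simp [Measure.real, Complex.volume_ball]
  ring

theorem norm_setIntegral_preimage_norm_Ioo_le {E : Type*} [NormedAddCommGroup E]
    [NormedSpace ℝ E] {F : ℂ → E} {a b κ : ℝ} (ha : 0 < a) (hab : a < b)
    (hF : ∀ u ∈ (fun u : ℂ => ‖u‖) ⁻¹' Ioo a b, ‖F u‖ ≤ κ * (‖u‖ ^ 2)⁻¹) :
    ‖∫ u in (fun u : ℂ => ‖u‖) ⁻¹' Ioo a b, F u‖ ≤ κ * (2 * π * Real.log (b / a)) := by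
  have hmeas : MeasurableSet ((fun u : ℂ => ‖u‖) ⁻¹' Ioo a b) :=
    measurableSet_Ioo.preimage continuous_norm.measurable
  have hfin : volume ((fun u : ℂ => ‖u‖) ⁻¹' Ioo a b) ≠ ⊤ :=
    ((measure_mono fun u (hu : ‖u‖ ∈ Ioo a b) => mem_ball_zero_iff.mpr hu.2).trans_lt
      measure_ball_lt_top).ne
  have hint : IntegrableOn (fun u : ℂ => (‖u‖ ^ 2)⁻¹) ((fun u : ℂ => ‖u‖) ⁻¹' Ioo a b) := by
    refine Measure.integrableOn_of_bounded (M := (a ^ 2)⁻¹) hfin (by fun_prop) ?_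
    filter_upwards [ae_restrict_mem hmeas] with u (hu : ‖u‖ ∈ Ioo a b)
    rw [norm_inv, norm_pow, norm_norm]
    gcongr
    exact hu.1.le
  rw [← integral_preimage_norm_Ioo_inv_sq ha hab, ← integral_const_mul]
  exact norm_integral_le_of_norm_le (hint.const_mul κ)
    ((ae_restrict_mem hmeas).mono hF)

theorem densityF_nonneg (k : ℕ) (t u : ℂ) : 0 ≤ densityF k t u :=
  mul_nonneg (by positivity) ((even_two_mul k).pow_nonneg _)

theorem densityF_le_inv_norm_sq (k : ℕ) (t : ℂ) {u : ℂ} (hu : u ≠ 0) :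
    densityF k t u ≤ 2 ^ k / π * (|Real.log ‖t‖| / π) ^ (2 * k) * (‖u‖ ^ 2)⁻¹ := by
  have hu : 0 < ‖u‖ := norm_pos_iff.mpr hu
  have hsin : |‖u‖ * Real.log ‖t‖ / π * Real.sin (π * Real.log ‖u‖ / Real.log ‖t‖)| ≤
      ‖u‖ * (|Real.log ‖t‖| / π) := by
    rw [abs_mul, abs_div, abs_mul, abs_of_pos hu, abs_of_pos Real.pi_pos, mul_div_assoc]
    exact mul_le_of_le_one_right (by positivity) (Real.abs_sin_le_one _)
  calc densityF k t u
      ≤ 2 ^ k / π * ‖u‖ ^ (-(2 * (k : ℤ)) - 2) * (‖u‖ * (|Real.log ‖t‖| / π)) ^ (2 * k) := by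
        refine mul_le_mul_of_nonneg_left ?_ (by positivity)
        rw [← (even_two_mul k).pow_abs]
        exact pow_le_pow_left₀ (abs_nonneg _) hsin _
    _ = 2 ^ k / π * (|Real.log ‖t‖| / π) ^ (2 * k) * (‖u‖ ^ 2)⁻¹ := by
        have hpow : ‖u‖ ^ (-(2 * (k : ℤ)) - 2) * ‖u‖ ^ (2 * k) = (‖u‖ ^ 2)⁻¹ := by
          rw [← zpow_natCast, ← zpow_add₀ hu.ne', ← zpow_natCast, ← zpow_neg]
          push_cast
          ring_nf
        rw [mul_pow, ← hpow]
        ring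

theorem norm_crossTerm_integrand_le (k : ℕ) {c C : ℝ} (hc0 : 0 < c) {f g : ℂ → ℂ}
    (hfb : ∀ u ∈ Metric.ball (0 : ℂ) c, ‖f u‖ ≤ C * ‖u‖)
    (hgb : ∀ v ∈ Metric.ball (0 : ℂ) c, ‖g v‖ ≤ C * ‖v‖) {t u : ℂ} (hu : u ∈ annulusA c t) :
    ‖f u * (starRingEnd ℂ) (g (t / u)) * (densityF k t u : ℂ)‖ ≤
      C ^ 2 * ‖t‖ * (2 ^ k / π * (|Real.log ‖t‖| / π) ^ (2 * k)) * (‖u‖ ^ 2)⁻¹ := by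
  obtain ⟨hlo, hhi⟩ := hu
  have hu0 : 0 < ‖u‖ := (div_nonneg (norm_nonneg t) hc0.le).trans_lt hlo
  have hf := hfb u (mem_ball_zero_iff.mpr hhi)
  have hg := hgb (t / u) <| mem_ball_zero_iff.mpr <| by
    rw [norm_div, div_lt_iff₀ hu0]
    rwa [div_lt_iff₀ hc0, mul_comm] at hlo
  rw [norm_div] at hg
  rw [norm_mul, norm_mul, Complex.norm_conj, Complex.norm_real, Real.norm_of_nonneg
    (densityF_nonneg k t u)]
  calc ‖f u‖ * ‖g (t / u)‖ * densityF k t u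
      ≤ (C * ‖u‖) * (C * (‖t‖ / ‖u‖)) *
          (2 ^ k / π * (|Real.log ‖t‖| / π) ^ (2 * k) * (‖u‖ ^ 2)⁻¹) := by
        refine mul_le_mul (mul_le_mul hf hg (norm_nonneg _) ((norm_nonneg _).trans hf))
          (densityF_le_inv_norm_sq k t (norm_pos_iff.mp hu0)) (densityF_nonneg k t u)
          (mul_nonneg ((norm_nonneg _).trans hf) ((norm_nonneg _).trans hg))
    _ = C ^ 2 * ‖t‖ * (2 ^ k / π * (|Real.log ‖t‖| / π) ^ (2 * k)) * (‖u‖ ^ 2)⁻¹ := by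
        field_simp

theorem cross_term_estimate_general (k : ℕ) (c : ℝ) (hc0 : 0 < c) (hc1 : c < 1)
    (C : ℝ) (hC : 0 < C) (f g : ℂ → ℂ)
    (hfb : ∀ u ∈ Metric.ball (0 : ℂ) c, ‖f u‖ ≤ C * ‖u‖)
    (hgb : ∀ v ∈ Metric.ball (0 : ℂ) c, ‖g v‖ ≤ C * ‖v‖) :
    ∃ C' > (0 : ℝ), ∀ t : ℂ, 0 < ‖t‖ → ‖t‖ < c →
      ‖∫ u in annulusA c t,
          f u * (starRingEnd ℂ) (g (t / u)) * (densityF k t u : ℂ)‖ ≤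
        C' * ‖t‖ * (Real.log (1 / ‖t‖)) ^ (2 * k + 1) := by
  refine ⟨C ^ 2 * 2 ^ (k + 1), by positivity, fun t ht0 htc => ?_⟩
  set L := Real.log (1 / ‖t‖) with hLdef
  have hL : |Real.log ‖t‖| = L := by
    rw [hLdef, one_div, Real.log_inv, abs_of_neg (Real.log_neg ht0 (htc.trans hc1))]
  have hL0 : 0 ≤ L := hL ▸ abs_nonneg _
  rcases lt_or_ge (‖t‖ / c) c with hne | hempty
  · have hlog : Real.log (c / (‖t‖ / c)) ≤ L := by
      refine Real.log_le_log (by positivity) ?_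
      rw [div_div_eq_mul_div]
      gcongr
      nlinarith
    calc _ ≤ C ^ 2 * ‖t‖ * (2 ^ k / π * (L / π) ^ (2 * k)) *
            (2 * π * Real.log (c / (‖t‖ / c))) := by
          rw [← hL]
          exact norm_setIntegral_preimage_norm_Ioo_le (by positivity) hne
            fun u hu => norm_crossTerm_integrand_le k hc0 hfb hgb hu
      _ ≤ C ^ 2 * ‖t‖ * (2 ^ k / π * (L / π) ^ (2 * k)) * (2 * π * L) := by gcongr
      _ = C ^ 2 * 2 ^ (k + 1) * ‖t‖ * ((L / π) ^ (2 * k) * L) := by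
          field_simp
          ring
      _ ≤ C ^ 2 * 2 ^ (k + 1) * ‖t‖ * L ^ (2 * k + 1) := by
          rw [pow_succ L]
          gcongr
          exact div_le_self hL0 (one_le_two.trans Real.two_le_pi)
  · have : annulusA c t = ∅ := eq_empty_of_forall_notMem fun u hu => by linarith [hu.1, hu.2]
    rw [this, Measure.restrict_empty, integral_zero_measure, norm_zero]
    positivity

/-- Let `k ≥ 1`, `0 < c < 1`, `C > 0`, and let `f, g` be holomorphic on the disc
`{|u| < c}` with `|f(u)| ≤ C|u|` and `|g(v)| ≤ C|v|` there.  Then there is `C′ > 0`,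
depending only on `k`, `c`, `C`, such that for every `t` with `0 < |t| < c`,
`|∫_{A_t} f(u)·conj(g(t/u))·F_{t,k}(u) dA(u)| ≤ C′·|t|·(log(1/|t|))^{2k+1}`. -/
theorem cross_term_estimate (k : ℕ) (hk : 1 ≤ k) (c : ℝ) (hc0 : 0 < c) (hc1 : c < 1)
    (C : ℝ) (hC : 0 < C) (f g : ℂ → ℂ)
    (hf : DifferentiableOn ℂ f (Metric.ball 0 c))
    (hg : DifferentiableOn ℂ g (Metric.ball 0 c))
    (hfb : ∀ u ∈ Metric.ball (0 : ℂ) c, ‖f u‖ ≤ C * ‖u‖)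
    (hgb : ∀ v ∈ Metric.ball (0 : ℂ) c, ‖g v‖ ≤ C * ‖v‖) :
    ∃ C' > (0 : ℝ), ∀ t : ℂ, 0 < ‖t‖ → ‖t‖ < c →
      ‖∫ u in annulusA c t,
          f u * (starRingEnd ℂ) (g (t / u)) * (densityF k t u : ℂ)‖ ≤
        C' * ‖t‖ * (Real.log (1 / ‖t‖)) ^ (2 * k + 1) :=
  cross_term_estimate_general k c hc0 hc1 C hC f g hfb hgb
end
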